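/- arXiv:2409.03335 — 4 statements merged into one kernel-verified Lean document; each statement's English description precedes it below -/
import Mathlib

section
/- Let λ ∈ (0,1), let k be a positive integer, and let w ~ N(0, (k−1)/k). Then E[tanh(λ + √λ·w) − (1/2)·tanh²(λ + √λ·w)] ≤ (1/2)·(λ + 3√(λ/k)). -/
open MeasureTheory ProbabilityTheory Real
open scoped ENNReal NNReal

/-!
Write `λ + √λ w = X + λ/k` with `X ~ N(t, t)`, `t = λ (k-1)/k`. Since `y ↦ y - y²/2` is
`2`-Lipschitz on `[-1, 1]` and `tanh` is `1`-Lipschitz, removing the shift `λ/k` costs at most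
`2λ/k`. For the law `N(t, t)` the density satisfies `p(-x) = p(x) e^{-2x}`, and
`1 - tanh x = (1 + tanh x) e^{-2x}`; comparing `x` with `-x` gives the Nishimori identity
`E tanh X = E tanh² X`. Hence `E[tanh X - tanh² X / 2] = E tanh X / 2`, and since `X` is
symmetric about `t ≥ 0` and `tanh (t + a) + tanh (t - a) ≤ 2 tanh t`, this is at most
`tanh t / 2 ≤ t / 2`.
Altogether the expectation is at most `λ/2 + 3λ/(2k) ≤ (λ + 3 √(λ/k)) / 2`, as `λ/k ≤ 1`.
-/

namespace Real

@[fun_prop]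
lemma continuous_tanh : Continuous tanh := by
  rw [show tanh = fun x => sinh x / cosh x from funext tanh_eq_sinh_div_cosh]
  exact continuous_sinh.div continuous_cosh fun x => (cosh_pos x).ne'

lemma hasDerivAt_tanh (x : ℝ) : HasDerivAt tanh (1 / cosh x ^ 2) x := by
  rw [show tanh = fun x => sinh x / cosh x from funext tanh_eq_sinh_div_cosh]
  have h := (hasDerivAt_sinh x).div (hasDerivAt_cosh x) (cosh_pos x).ne'
  rwa [← sq, ← sq, cosh_sq_sub_sinh_sq] at h

lemma lipschitzWith_one_tanh : LipschitzWith 1 tanh := by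
  refine lipschitzWith_of_nnnorm_deriv_le (fun x => (hasDerivAt_tanh x).differentiableAt)
    fun x => ?_
  rw [(hasDerivAt_tanh x).deriv, ← NNReal.coe_le_coe, coe_nnnorm, Real.norm_eq_abs,
    abs_of_pos (by positivity), NNReal.coe_one, div_le_one (by positivity)]
  exact one_le_pow₀ (one_le_cosh x)

lemma tanh_le_self {x : ℝ} (hx : 0 ≤ x) : tanh x ≤ x := by
  simpa [abs_of_nonneg hx] using (le_abs_self _).trans (lipschitzWith_one_tanh.dist_le_mul x 0)

lemma one_sub_tanh (x : ℝ) : 1 - tanh x = (1 + tanh x) * exp (-(2 * x)) := by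
  have hx : exp (-(2 * x)) = exp (-x) / exp x := by rw [← exp_sub]; ring_nf
  rw [tanh_eq_sinh_div_cosh, hx, ← cosh_sub_sinh, ← cosh_add_sinh]
  field_simp [(cosh_pos x).ne', (exp_pos x).ne']

lemma tanh_add_add_tanh_sub_le {m : ℝ} (hm : 0 ≤ m) (a : ℝ) :
    tanh (m + a) + tanh (m - a) ≤ 2 * tanh m := by
  simp only [tanh_eq_sinh_div_cosh, sinh_add, sinh_sub, cosh_add, cosh_sub]
  have hp := cosh_pos (m + a)
  have hq := cosh_pos (m - a)
  rw [cosh_add] at hp; rw [cosh_sub] at hq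
  have hc := cosh_pos m
  have hs : 0 ≤ sinh m := sinh_nonneg_iff.2 hm
  rw [div_add_div _ _ hp.ne' hq.ne', mul_div_assoc', div_le_div_iff₀ (by positivity) hc]
  nlinarith [cosh_sq_sub_sinh_sq m, cosh_sq_sub_sinh_sq a, mul_nonneg hs (sq_nonneg (sinh a)),
    mul_nonneg (mul_nonneg hs hc.le) (sq_nonneg (sinh a))]

lemma tanh_add_sub_half_tanh_sq_le {d : ℝ} (hd : 0 ≤ d) (x : ℝ) :
    tanh (x + d) - 1 / 2 * tanh (x + d) ^ 2 ≤ tanh x - 1 / 2 * tanh x ^ 2 + 2 * d := by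
  have hlip : |tanh (x + d) - tanh x| ≤ d := by
    simpa [dist_eq, abs_of_nonneg hd] using lipschitzWith_one_tanh.dist_le_mul (x + d) x
  have hbound_shift := abs_lt.mp (abs_tanh_lt_one (x + d))
  have hbound := abs_lt.mp (abs_tanh_lt_one x)
  have hdiff := abs_le.mp hlip
  nlinarith

end Real

section TanhIntegrable

variable {α : Type*} [MeasurableSpace α] {μ : Measure α} [IsFiniteMeasure μ] {f : α → ℝ}

lemma integrable_tanh_comp (hf : Measurable f) : Integrable (fun x => tanh (f x)) μ :=
  .of_bound (continuous_tanh.measurable.comp hf).aestronglyMeasurable 1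
    (.of_forall fun x => (abs_tanh_lt_one (f x)).le)

lemma integrable_tanh_sq_comp (hf : Measurable f) : Integrable (fun x => tanh (f x) ^ 2) μ :=
  .of_bound ((continuous_tanh.measurable.comp hf).pow_const 2).aestronglyMeasurable 1
    (.of_forall fun x => by simpa using (tanh_sq_lt_one (f x)).le)

end TanhIntegrable

namespace ProbabilityTheory

lemma integral_comp_const_add_mul_gaussianReal {f : ℝ → ℝ} (hf : Continuous f) (m c : ℝ)
    (v : ℝ≥0) :
    ∫ w, f (m + c * w) ∂gaussianReal 0 v
      = ∫ x, f x ∂gaussianReal m (.mk (c ^ 2) (sq_nonneg _) * v) := by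
  have hmap : (gaussianReal 0 v).map (fun w => m + c * w)
      = gaussianReal m (.mk (c ^ 2) (sq_nonneg _) * v) := by
    rw [show (fun w => m + c * w) = (m + ·) ∘ (c * ·) from rfl,
      ← Measure.map_map (by fun_prop) (by fun_prop), gaussianReal_map_const_mul,
      gaussianReal_map_const_add]
    simp
  rw [← hmap, integral_map (by fun_prop) hf.aestronglyMeasurable]

lemma integral_comp_neg_gaussianReal_self (t : ℝ≥0) (g : ℝ → ℝ) :
    ∫ x, g (-x) ∂gaussianReal t t = ∫ x, g x * exp (-(2 * x)) ∂gaussianReal t t := by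
  rcases eq_or_ne t 0 with rfl | ht
  · simp
  have hpdf (x : ℝ) : gaussianPDFReal t t (-x) = gaussianPDFReal t t x * exp (-(2 * x)) := by
    have : (t : ℝ) ≠ 0 := by exact_mod_cast ht
    rw [gaussianPDFReal, gaussianPDFReal, mul_assoc _ (exp _), ← exp_add]
    congr 2
    field_simp
    ring
  rw [integral_gaussianReal_eq_integral_smul ht, integral_gaussianReal_eq_integral_smul ht,
    ← integral_neg_eq_self]
  simp only [neg_neg, hpdf, smul_eq_mul]
  congr 1 with x
  ring

lemma integral_tanh_gaussianReal_self (t : ℝ≥0) :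
    ∫ x, tanh x ∂gaussianReal t t = ∫ x, tanh x ^ 2 ∂gaussianReal t t := by
  have hsym := integral_comp_neg_gaussianReal_self t fun x => tanh x * (1 + tanh x)
  simp only [tanh_neg, mul_assoc, ← one_sub_tanh] at hsym
  have hzero : ∫ x, (tanh x - tanh x ^ 2) ∂gaussianReal t t = 0 := by
    have : ∫ x, -(tanh x - tanh x ^ 2) ∂gaussianReal t t
        = ∫ x, (tanh x - tanh x ^ 2) ∂gaussianReal t t := by
      convert hsym using 3 with x <;> ring
    rw [integral_neg] at this
    linarith
  rwa [integral_sub (integrable_tanh_comp measurable_id') (integrable_tanh_sq_comp measurable_id'),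
    sub_eq_zero] at hzero

lemma integral_tanh_gaussianReal_le {m : ℝ} (hm : 0 ≤ m) (v : ℝ≥0) :
    ∫ x, tanh x ∂gaussianReal m v ≤ tanh m := by
  have hint : Integrable (fun x => tanh x) (gaussianReal m v) :=
    integrable_tanh_comp measurable_id'
  have hint_refl : Integrable (fun x => tanh (2 * m - x)) (gaussianReal m v) :=
    integrable_tanh_comp (by fun_prop)
  have hrefl : ∫ x, tanh (2 * m - x) ∂gaussianReal m v = ∫ x, tanh x ∂gaussianReal m v := by
    conv_rhs => rw [← show (gaussianReal m v).map (2 * m - ·) = gaussianReal m v by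
      rw [gaussianReal_map_const_sub]; ring_nf]
    rw [integral_map (by fun_prop) continuous_tanh.aestronglyMeasurable]
  have h2 : 2 * ∫ x, tanh x ∂gaussianReal m v ≤ 2 * tanh m :=
    calc 2 * ∫ x, tanh x ∂gaussianReal m v
        = ∫ x, tanh x ∂gaussianReal m v + ∫ x, tanh (2 * m - x) ∂gaussianReal m v := by
          rw [hrefl]; ring
      _ = ∫ x, (tanh x + tanh (2 * m - x)) ∂gaussianReal m v := by
          rw [integral_add hint hint_refl]
      _ ≤ ∫ _, 2 * tanh m ∂gaussianReal m v := by
          refine integral_mono (hint.add hint_refl) (integrable_const _) fun x => ?_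
          have := tanh_add_add_tanh_sub_le hm (x - m)
          rwa [add_sub_cancel, show m - (x - m) = 2 * m - x by ring] at this
      _ = 2 * tanh m := by simp
  linarith

lemma integral_tanh_sub_half_tanh_sq_gaussianReal_le {m : ℝ} {t : ℝ≥0}
    (htm : (t : ℝ) ≤ m) :
    ∫ x, (tanh x - 1 / 2 * tanh x ^ 2) ∂gaussianReal m t ≤ 1 / 2 * t + 2 * (m - t) := by
  set d := m - (t : ℝ)
  have hd : 0 ≤ d := sub_nonneg.2 htm
  have hF {g : ℝ → ℝ} (hg : Measurable g) {ν : Measure ℝ} [IsFiniteMeasure ν] :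
      Integrable (fun x => tanh (g x) - 1 / 2 * tanh (g x) ^ 2) ν :=
    (integrable_tanh_comp hg).sub ((integrable_tanh_sq_comp hg).const_mul _)
  have hshift : ∫ x, (tanh (x - d) - 1 / 2 * tanh (x - d) ^ 2) ∂gaussianReal m t
      = ∫ x, (tanh x - 1 / 2 * tanh x ^ 2) ∂gaussianReal t t := by
    have hmap : (gaussianReal m t).map (· - d) = gaussianReal t t := by
      rw [gaussianReal_map_sub_const, sub_sub_cancel]
    rw [← hmap, integral_map (by fun_prop) (by fun_prop)]
  calc ∫ x, (tanh x - 1 / 2 * tanh x ^ 2) ∂gaussianReal m t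
      ≤ ∫ x, (tanh (x - d) - 1 / 2 * tanh (x - d) ^ 2 + 2 * d) ∂gaussianReal m t := by
        refine integral_mono (hF measurable_id') ((hF (by fun_prop)).add (integrable_const _))
          fun x => ?_
        simpa using tanh_add_sub_half_tanh_sq_le hd (x - d)
    _ = 1 / 2 * ∫ x, tanh x ∂gaussianReal t t + 2 * d := by
        rw [integral_add (hF (by fun_prop)) (integrable_const _), hshift,
          integral_sub (integrable_tanh_comp measurable_id')
            ((integrable_tanh_sq_comp measurable_id').const_mul _),
          integral_const_mul, ← integral_tanh_gaussianReal_self]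
        simp only [integral_const, probReal_univ, smul_eq_mul, one_mul]
        ring
    _ ≤ 1 / 2 * t + 2 * d := by
        have := (integral_tanh_gaussianReal_le t.coe_nonneg t).trans (tanh_le_self t.coe_nonneg)
        linarith

end ProbabilityTheory

/-- Lemma 7: for `λ ∈ (0,1)`, a positive integer `k` and
`w ~ N(0, (k-1)/k)`,
`E[tanh(λ + √λ w) - (1/2) tanh²(λ + √λ w)] ≤ (1/2)(λ + 3 √(λ/k))`. -/
theorem stmt6 (lam : ℝ) (hlam : lam ∈ Set.Ioo (0 : ℝ) 1) (k : ℕ) (hk : 0 < k) :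
    (∫ w, (Real.tanh (lam + Real.sqrt lam * w)
        - (1 / 2) * Real.tanh (lam + Real.sqrt lam * w) ^ 2)
      ∂(gaussianReal 0 (((k - 1 : ℕ) : ℝ≥0) / (k : ℝ≥0))))
      ≤ (1 / 2) * (lam + 3 * Real.sqrt (lam / k)) := by
  obtain ⟨hlam0, hlam1⟩ := hlam
  have hkR : (0 : ℝ) < k := Nat.cast_pos.2 hk
  set v : ℝ≥0 := ((k - 1 : ℕ) : ℝ≥0) / (k : ℝ≥0)
  have hv : (v : ℝ) = 1 - 1 / k := by
    simp only [v, NNReal.coe_div, NNReal.coe_natCast, Nat.cast_sub hk, Nat.cast_one]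
    field_simp
  set t : ℝ≥0 := .mk (Real.sqrt lam ^ 2) (sq_nonneg _) * v
  have ht : (t : ℝ) = lam * (1 - 1 / k) := by
    rw [NNReal.coe_mul, NNReal.coe_mk, Real.sq_sqrt hlam0.le, hv]
  have hsmall : lam / k ≤ 1 :=
    (div_le_one hkR).2 (by linarith [(Nat.one_le_cast (α := ℝ)).2 hk])
  rw [integral_comp_const_add_mul_gaussianReal (f := fun x => tanh x - 1 / 2 * tanh x ^ 2)
    (by fun_prop)]
  calc _ ≤ 1 / 2 * t + 2 * (lam - t) :=
        integral_tanh_sub_half_tanh_sq_gaussianReal_le (by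
          rw [ht]; nlinarith [one_div_nonneg.2 hkR.le])
    _ = 1 / 2 * lam + 3 / 2 * (lam / k) := by rw [ht]; ring
    _ ≤ _ := by linarith [Real.le_sqrt_self_iff.2 hsmall]
end

section
/- Let D_L = {(x_i, y_i)}_{i=1}^L be L i.i.d. labeled samples from the symmetric sparse Gaussian mixture model with a k-sparse μ whose nonzero entries are ±√(λ/k). Assume k = ⌊c₁ p^α⌋ for some α ∈ (0,1) and L = ⌈(2βk/λ)·log(p−k)⌉ for some β ∈ (0,1). Let S_L be the indices of the k largest magnitudes of w_L = (1/L)·Σ_{i=1}^L y_i x_i. If β > 1−α, then for every ε ∈ (0,1), P(|S ∩ S_L|/k > 1−ε) → 1 as p → ∞. -/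
open MeasureTheory ProbabilityTheory Filter
open scoped ENNReal NNReal

noncomputable section

/-- Product of independent one-dimensional Gaussians `N(m j, 1)`: the law of `N(m, I_p)`. -/
def gaussPi {p : ℕ} (m : Fin p → ℝ) : Measure (Fin p → ℝ) :=
  Measure.pi fun j => gaussianReal (m j) 1

/-- The law of a labeled sample `(x, y)`: `y` uniform on `{-1,1}`, `x | y ~ N(yμ, I_p)`. -/
def labeledLaw {p : ℕ} (m : Fin p → ℝ) : Measure ((Fin p → ℝ) × ℝ) :=
  (2 : ℝ≥0∞)⁻¹ • (gaussPi m).map (fun x => (x, (1 : ℝ)))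
    + (2 : ℝ≥0∞)⁻¹ • (gaussPi (fun j => -m j)).map (fun x => (x, (-1 : ℝ)))

/-- The labeled-data vector `w_L = (1/L) ∑ᵢ yᵢ xᵢ`. -/
def wL {p L : ℕ} (dl : Fin L → (Fin p → ℝ) × ℝ) : Fin p → ℝ :=
  fun j => (L : ℝ)⁻¹ * ∑ i, (dl i).2 * (dl i).1 j

/-- `T` is a set of `m` indices with the largest magnitudes of `w`. -/
def IsTopAbs {p : ℕ} (m : ℕ) (w : Fin p → ℝ) (T : Finset (Fin p)) : Prop :=
  T.card = m ∧ ∀ i ∈ T, ∀ j ∉ T, |w j| ≤ |w i|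

/-!
Each coordinate of `w_L` is the mean of `L` independent `N(μ_j, 1)` variables, so by Hoeffding's
inequality for sub-Gaussian variables it deviates from `μ_j` by `t` with probability at most
`2 exp (-L t² / 2)`. Fix the threshold `τ = θ √(λ/k)`. If fewer than `εk` support coordinates of
`w_L` fall below `τ` and fewer than `εk` off-support coordinates exceed it, then the top-`k` set
shares more than `(1 - ε) k` indices with `S`. Markov's inequality for these two counts bounds the
failure probability by `2 ((p - k)^(-β(1-θ)²) + (p - k)^(1-βθ²) / k) / ε`, and since `k ≍ p^α`
this tends to zero as soon as `(1 - α) / β < θ² < 1`.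
-/

open Real Finset Topology

namespace ProbabilityTheory

lemma hasSubgaussianMGF_id_gaussianReal (v : ℝ≥0) : HasSubgaussianMGF id v (gaussianReal 0 v) where
  integrable_exp_mul t := integrable_exp_mul_gaussianReal t
  mgf_le t := by simp [mgf_id_gaussianReal]

lemma HasSubgaussianMGF.measureReal_abs_ge_le {Ω : Type*} [MeasurableSpace Ω] {μ : Measure Ω}
    [IsFiniteMeasure μ] {X : Ω → ℝ} {c : ℝ≥0} (h : HasSubgaussianMGF X c μ) {ε : ℝ}
    (hε : 0 ≤ ε) :
    μ.real {ω | ε ≤ |X ω|} ≤ 2 * exp (-ε ^ 2 / (2 * c)) :=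
  calc μ.real {ω | ε ≤ |X ω|} ≤ μ.real ({ω | ε ≤ X ω} ∪ {ω | ε ≤ (-X) ω}) :=
        measureReal_mono fun ω hω => by
          rcases le_abs'.mp (show ε ≤ |X ω| from hω) with h | h
          · exact Or.inr (by simp only [Set.mem_ofPred_eq, Pi.neg_apply]; linarith)
          · exact Or.inl h
    _ ≤ μ.real {ω | ε ≤ X ω} + μ.real {ω | ε ≤ (-X) ω} := measureReal_union_le _ _
    _ ≤ 2 * exp (-ε ^ 2 / (2 * c)) := by
        linarith [h.measure_ge_le hε, h.neg.measure_ge_le hε]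

lemma measureReal_card_filter_ge_le {Ω ι : Type*} [MeasurableSpace Ω] (μ : Measure Ω)
    [IsFiniteMeasure μ] (F : Finset ι) (Q : ι → Ω → Prop) [∀ i ω, Decidable (Q i ω)]
    (hQ : ∀ i, MeasurableSet {ω | Q i ω}) {c : ℝ} (hc : 0 < c) :
    μ.real {ω | c ≤ #{i ∈ F | Q i ω}} ≤ (∑ i ∈ F, μ.real {ω | Q i ω}) / c := by
  have hcount : ∀ ω, (#{i ∈ F | Q i ω} : ℝ) = ∑ i ∈ F, {ω | Q i ω}.indicator 1 ω := by
    intro ω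
    simp only [Finset.card_filter, Set.indicator_apply, Set.mem_ofPred_eq, Pi.one_apply]
    push_cast
    rfl
  have hint : ∀ i, Integrable ({ω | Q i ω}.indicator (1 : Ω → ℝ)) μ :=
    fun i => (integrable_const 1).indicator (hQ i)
  rw [le_div_iff₀ hc, mul_comm]
  calc c * μ.real {ω | c ≤ #{i ∈ F | Q i ω}}
      ≤ ∫ ω, (#{i ∈ F | Q i ω} : ℝ) ∂μ := by
        refine mul_meas_ge_le_integral_of_nonneg (ae_of_all _ fun _ => by positivity) ?_ c
        simp_rw [hcount]
        exact integrable_finsetSum _ fun i _ => hint i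
    _ = ∑ i ∈ F, μ.real {ω | Q i ω} := by
        simp_rw [hcount]
        rw [integral_finsetSum _ fun i _ => hint i]
        exact Finset.sum_congr rfl fun i _ => integral_indicator_one (hQ i)

end ProbabilityTheory

lemma IsTopAbs.card_le_card_inter_add_max {p k : ℕ} {w : Fin p → ℝ} {T : Finset (Fin p)}
    (hT : IsTopAbs k w T) {S : Finset (Fin p)} (hS : #S = k) (τ : ℝ) :
    k ≤ #(S ∩ T) + max #{j ∈ S | |w j| ≤ τ} #{j ∈ Sᶜ | τ < |w j|} := by
  by_cases hsub : {j ∈ S | τ < |w j|} ⊆ T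
  · have hsplit := Finset.card_filter_add_card_filter_not (s := S) (fun j => τ < |w j|)
    have hle : #{j ∈ S | τ < |w j|} ≤ #(S ∩ T) :=
      card_le_card fun j hj => mem_inter.mpr ⟨(mem_filter.mp hj).1, hsub hj⟩
    simp only [not_lt] at hsplit
    omega
  · obtain ⟨j₀, hj₀, hj₀T⟩ := not_subset.mp hsub
    have hT_above : ∀ i ∈ T, τ < |w i| :=
      fun i hi => (mem_filter.mp hj₀).2.trans_le (hT.2 i hi j₀ hj₀T)
    have hle : #(T \ S) ≤ #{j ∈ Sᶜ | τ < |w j|} :=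
      card_le_card fun i hi => by
        obtain ⟨hiT, hiS⟩ := mem_sdiff.mp hi
        exact mem_filter.mpr ⟨mem_compl.mpr hiS, hT_above i hiT⟩
    have hsplit := card_sdiff_add_card_inter T S
    rw [inter_comm, hT.1] at hsplit
    omega

lemma le_measureReal_card_inter_of_isTopAbs {Ω : Type*} [MeasurableSpace Ω] (P : Measure Ω)
    [IsProbabilityMeasure P] {p k : ℕ} (hk : 0 < k) {W : Ω → Fin p → ℝ}
    (hW : ∀ j, Measurable fun ω => W ω j) {S : Finset (Fin p)} (hS : #S = k)
    {T : Ω → Finset (Fin p)} (hT : ∀ ω, IsTopAbs k (W ω) (T ω)) (τ : ℝ) {ε : ℝ} (hε : 0 < ε) :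
    1 - (∑ j ∈ S, P.real {ω | |W ω j| ≤ τ} + ∑ j ∈ Sᶜ, P.real {ω | τ < |W ω j|}) / (ε * k)
      ≤ P.real {ω | 1 - ε < #(S ∩ T ω) / (k : ℝ)} := by
  have hεk : 0 < ε * k := by positivity
  set good := {ω | 1 - ε < #(S ∩ T ω) / (k : ℝ)}
  have hbad : goodᶜ ⊆ {ω | ε * k ≤ #{j ∈ S | |W ω j| ≤ τ}}
      ∪ {ω | ε * k ≤ #{j ∈ Sᶜ | τ < |W ω j|}} := by
    intro ω hω
    have hcount := (hT ω).card_le_card_inter_add_max hS τ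
    have hω' : #(S ∩ T ω) ≤ (1 - ε) * k := by
      simpa [good, not_lt, div_le_iff₀ (Nat.cast_pos.mpr hk : (0 : ℝ) < k)] using hω
    by_contra! hcon
    simp only [Set.mem_union, Set.mem_ofPred_eq, not_or, not_le] at hcon
    have : (k : ℝ) ≤ #(S ∩ T ω) + max (#{j ∈ S | |W ω j| ≤ τ} : ℝ) #{j ∈ Sᶜ | τ < |W ω j|} := by
      exact_mod_cast hcount
    linarith [max_lt hcon.1 hcon.2]
  have hmarkov₁ := measureReal_card_filter_ge_le P S (fun j ω => |W ω j| ≤ τ)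
    (fun j => measurableSet_le (hW j).abs measurable_const) hεk
  have hmarkov₂ := measureReal_card_filter_ge_le P Sᶜ (fun j ω => τ < |W ω j|)
    (fun j => measurableSet_lt measurable_const (hW j).abs) hεk
  have hcover : 1 ≤ P.real good + P.real goodᶜ := by
    simpa [Set.union_compl_self] using measureReal_union_le (μ := P) good goodᶜ
  have hfail := (measureReal_mono hbad (measure_ne_top P _)).trans (measureReal_union_le _ _)
  rw [add_div]
  linarith

section Model

variable {p : ℕ} (m : Fin p → ℝ)

instance : IsProbabilityMeasure (gaussPi m) := by
  unfold gaussPi; infer_instance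

instance : IsProbabilityMeasure (labeledLaw m) := by
  have : IsProbabilityMeasure ((gaussPi m).map fun x => (x, (1 : ℝ))) :=
    Measure.isProbabilityMeasure_map (by fun_prop)
  have : IsProbabilityMeasure ((gaussPi fun j => -m j).map fun x => (x, (-1 : ℝ))) :=
    Measure.isProbabilityMeasure_map (by fun_prop)
  constructor
  simp [labeledLaw, ENNReal.inv_two_add_inv_two]

lemma gaussPi_map_apply (j : Fin p) : (gaussPi m).map (fun x => x j) = gaussianReal (m j) 1 :=
  (measurePreserving_eval _ j).map_eq

lemma labeledLaw_map_label_mul_apply (j : Fin p) :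
    (labeledLaw m).map (fun xy => xy.2 * xy.1 j) = gaussianReal (m j) 1 := by
  have hneg : (gaussPi fun j => -m j).map (fun x => -x j) = gaussianReal (m j) 1 := by
    rw [← Function.comp_def (fun y : ℝ => -y) (fun x : Fin p → ℝ => x j),
      ← Measure.map_map (by fun_prop) (by fun_prop), gaussPi_map_apply, gaussianReal_map_neg,
      neg_neg]
  rw [labeledLaw, Measure.map_add _ _ (by fun_prop), Measure.map_smul, Measure.map_smul,
    Measure.map_map (by fun_prop) (by fun_prop), Measure.map_map (by fun_prop) (by fun_prop)]
  simp only [Function.comp_def, one_mul, neg_one_mul, gaussPi_map_apply, hneg, ← add_smul,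
    ENNReal.inv_two_add_inv_two, one_smul]

lemma measurable_wL_apply {L : ℕ} (j : Fin p) :
    Measurable fun d : Fin L → (Fin p → ℝ) × ℝ => wL d j := by
  unfold wL; fun_prop

lemma hasSubgaussianMGF_sum_label_mul_apply_sub (j : Fin p) (L : ℕ) :
    HasSubgaussianMGF (fun d : Fin L → (Fin p → ℝ) × ℝ => ∑ i, ((d i).2 * (d i).1 j - m j)) L
      (Measure.pi fun _ => labeledLaw m) := by
  have hlaw : (labeledLaw m).map (fun xy => xy.2 * xy.1 j - m j) = gaussianReal 0 1 := by
    rw [← Function.comp_def (· - m j) (fun xy : (Fin p → ℝ) × ℝ => xy.2 * xy.1 j),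
      ← Measure.map_map (by fun_prop) (by fun_prop), labeledLaw_map_label_mul_apply,
      gaussianReal_map_sub_const, sub_self]
  have hcoord : HasSubgaussianMGF (fun xy : (Fin p → ℝ) × ℝ => xy.2 * xy.1 j - m j) 1
      (labeledLaw m) := by
    rw [← HasSubgaussianMGF.id_map_iff (by fun_prop), hlaw]
    exact hasSubgaussianMGF_id_gaussianReal 1
  have hsample : ∀ i : Fin L, HasSubgaussianMGF (fun d : Fin L → (Fin p → ℝ) × ℝ =>
      (d i).2 * (d i).1 j - m j) 1 (Measure.pi fun _ => labeledLaw m) := by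
    intro i
    refine HasSubgaussianMGF.of_map (X := fun xy : (Fin p → ℝ) × ℝ => xy.2 * xy.1 j - m j)
      (Y := fun d : Fin L → (Fin p → ℝ) × ℝ => d i) (measurable_pi_apply i).aemeasurable ?_
    rwa [(measurePreserving_eval _ i).map_eq]
  have hindep := iIndepFun_pi (μ := fun _ : Fin L => labeledLaw m)
    (X := fun _ xy => xy.2 * xy.1 j - m j) (fun _ => by fun_prop)
  simpa using HasSubgaussianMGF.sum_of_iIndepFun hindep (s := Finset.univ) fun i _ => hsample i

lemma measureReal_abs_wL_sub_ge_le {L : ℕ} (hL : 0 < L) (j : Fin p) {t : ℝ} (ht : 0 ≤ t) :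
    (Measure.pi fun _ : Fin L => labeledLaw m).real {d | t ≤ |wL d j - m j|}
      ≤ 2 * exp (-L * t ^ 2 / 2) := by
  have hL' : (0 : ℝ) < L := Nat.cast_pos.mpr hL
  have hsum : ∀ d : Fin L → (Fin p → ℝ) × ℝ,
      ∑ i, ((d i).2 * (d i).1 j - m j) = L * (wL d j - m j) := by
    intro d
    simp only [wL, Finset.sum_sub_distrib, Finset.sum_const, Finset.card_univ, Fintype.card_fin,
      nsmul_eq_mul]
    field_simp
  have hevent : {d | t ≤ |wL d j - m j|}
      = {d : Fin L → (Fin p → ℝ) × ℝ | L * t ≤ |∑ i, ((d i).2 * (d i).1 j - m j)|} := by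
    ext d
    simp only [Set.mem_ofPred_eq, hsum, abs_mul, Nat.abs_cast, mul_le_mul_iff_right₀ hL']
  rw [hevent]
  convert (hasSubgaussianMGF_sum_label_mul_apply_sub m j L).measureReal_abs_ge_le
    (by positivity : 0 ≤ (L : ℝ) * t) using 3
  push_cast
  field_simp

end Model

lemma le_measureReal_card_inter_of_isTopAbs_wL {p k L : ℕ} (hk : 0 < k) (hL : 0 < L)
    {m : Fin p → ℝ} {S : Finset (Fin p)} (hS : #S = k) (hm0 : ∀ j ∉ S, m j = 0) {s : ℝ}
    (hm1 : ∀ j ∈ S, |m j| = s) {τ : ℝ} (hτ0 : 0 ≤ τ) (hτs : τ ≤ s)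
    {T : (Fin L → (Fin p → ℝ) × ℝ) → Finset (Fin p)} (hT : ∀ d, IsTopAbs k (wL d) (T d))
    {ε : ℝ} (hε : 0 < ε) :
    1 - 2 * (exp (-L * (s - τ) ^ 2 / 2) + (p - k) * exp (-L * τ ^ 2 / 2) / k) / ε
      ≤ (Measure.pi fun _ => labeledLaw m).real {d | 1 - ε < #(S ∩ T d) / (k : ℝ)} := by
  set P := Measure.pi fun _ : Fin L => labeledLaw m
  have hmiss : ∀ j ∈ S, P.real {d | |wL d j| ≤ τ} ≤ 2 * exp (-L * (s - τ) ^ 2 / 2) := by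
    intro j hj
    refine (measureReal_mono (fun d (hd : |wL d j| ≤ τ) => ?_)).trans
      (measureReal_abs_wL_sub_ge_le m hL j (sub_nonneg.mpr hτs))
    show s - τ ≤ |wL d j - m j|
    linarith [hm1 j hj, abs_sub_abs_le_abs_sub (m j) (wL d j), abs_sub_comm (m j) (wL d j)]
  have hfalse : ∀ j ∈ Sᶜ, P.real {d | τ < |wL d j|} ≤ 2 * exp (-L * τ ^ 2 / 2) := by
    intro j hj
    refine (measureReal_mono (fun d (hd : τ < |wL d j|) => ?_)).trans
      (measureReal_abs_wL_sub_ge_le m hL j hτ0)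
    show τ ≤ |wL d j - m j|
    rw [hm0 j (mem_compl.mp hj), sub_zero]
    exact hd.le
  have hcard : (#Sᶜ : ℝ) = p - k := by
    have hkp : k ≤ p := by simpa [hS] using card_le_univ S
    rw [card_compl, Fintype.card_fin, hS, Nat.cast_sub hkp]
  have hmiss_sum := sum_le_card_nsmul S _ _ hmiss
  have hfalse_sum := sum_le_card_nsmul Sᶜ _ _ hfalse
  rw [nsmul_eq_mul, hS] at hmiss_sum
  rw [nsmul_eq_mul, hcard] at hfalse_sum
  refine le_trans ?_
    (le_measureReal_card_inter_of_isTopAbs P hk (measurable_wL_apply ·) hS hT τ hε)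
  have hk' : (0 : ℝ) < k := Nat.cast_pos.mpr hk
  calc 1 - 2 * (exp (-L * (s - τ) ^ 2 / 2) + (p - k) * exp (-L * τ ^ 2 / 2) / k) / ε
      = 1 - (k * (2 * exp (-L * (s - τ) ^ 2 / 2)) + (p - k) * (2 * exp (-L * τ ^ 2 / 2)))
          / (ε * k) := by
        field_simp
    _ ≤ _ := by gcongr

lemma exp_neg_le_rpow_neg {x a b : ℝ} (hx : 0 < x) (h : a * log x ≤ b) :
    exp (-b) ≤ x ^ (-a) := by
  rw [rpow_def_of_pos hx]
  exact exp_le_exp.mpr (by linarith)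

lemma le_measureReal_card_inter_of_le_sampleSize {p k L : ℕ} (hk : 0 < k)
    (hX : 1 < (p : ℝ) - k) {β lam : ℝ} (hβ : 0 < β) (hlam : 0 < lam)
    (hL : 2 * β * k * log (p - k) / lam ≤ L) {m : Fin p → ℝ} {S : Finset (Fin p)} (hS : #S = k)
    (hm0 : ∀ j ∉ S, m j = 0) (hm1 : ∀ j ∈ S, |m j| = √(lam / k)) {θ : ℝ} (hθ0 : 0 ≤ θ)
    (hθ1 : θ ≤ 1) {T : (Fin L → (Fin p → ℝ) × ℝ) → Finset (Fin p)}
    (hT : ∀ d, IsTopAbs k (wL d) (T d)) {ε : ℝ} (hε : 0 < ε) :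
    1 - 2 * (((p : ℝ) - k) ^ (-(β * (1 - θ) ^ 2)) + ((p : ℝ) - k) ^ (1 - β * θ ^ 2) / k) / ε
      ≤ (Measure.pi fun _ => labeledLaw m).real {d | 1 - ε < #(S ∩ T d) / (k : ℝ)} := by
  set X : ℝ := p - k
  set s := √(lam / k)
  have hX0 : 0 < X := by linarith
  have hlog : 0 < log X := log_pos hX
  have hLpos : 0 < L := by exact_mod_cast (by positivity : 0 < 2 * β * k * log X / lam).trans_le hL
  have hs : s ^ 2 = lam / k := sq_sqrt (by positivity)
  have hexponent : ∀ r, β * r ^ 2 * log X ≤ L * (r * s) ^ 2 / 2 := fun r =>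
    calc β * r ^ 2 * log X = 2 * β * k * log X / lam * (r ^ 2 * s ^ 2 / 2) := by
          rw [hs]; field_simp
      _ ≤ L * (r ^ 2 * s ^ 2 / 2) := by gcongr
      _ = L * (r * s) ^ 2 / 2 := by ring
  have hmiss : exp (-L * (s - θ * s) ^ 2 / 2) ≤ X ^ (-(β * (1 - θ) ^ 2)) := by
    rw [show -(L : ℝ) * (s - θ * s) ^ 2 / 2 = -(L * ((1 - θ) * s) ^ 2 / 2) by ring]
    exact exp_neg_le_rpow_neg hX0 (hexponent _)
  have hfalse : X * exp (-L * (θ * s) ^ 2 / 2) ≤ X ^ (1 - β * θ ^ 2) := by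
    rw [sub_eq_add_neg, rpow_add hX0, rpow_one, show -(L : ℝ) * (θ * s) ^ 2 / 2
      = -(L * (θ * s) ^ 2 / 2) by ring]
    gcongr
    exact exp_neg_le_rpow_neg hX0 (hexponent _)
  refine le_trans ?_ (le_measureReal_card_inter_of_isTopAbs_wL hk hLpos hS hm0 hm1
    (τ := θ * s) (by positivity) (mul_le_of_le_one_left (sqrt_nonneg _) hθ1) hT hε)
  gcongr

lemma tendsto_mul_natCast_rpow_atTop {c α : ℝ} (hc : 0 < c) (hα : 0 < α) :
    Tendsto (fun p : ℕ => c * (p : ℝ) ^ α) atTop atTop :=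
  ((tendsto_rpow_atTop hα).comp tendsto_natCast_atTop_atTop).const_mul_atTop hc

section FloorRpow

variable {c α : ℝ} (hc : 0 < c) {k : ℕ → ℕ} (hk : ∀ p : ℕ, k p = ⌊c * (p : ℝ) ^ α⌋₊)
include hc hk

lemma eventually_half_mul_rpow_le_of_eq_floor (hα : 0 < α) :
    ∀ᶠ p : ℕ in atTop, c * (p : ℝ) ^ α / 2 ≤ k p := by
  filter_upwards [(tendsto_mul_natCast_rpow_atTop hc hα).eventually_ge_atTop 2] with p hp
  have := Nat.sub_one_lt_floor (c * (p : ℝ) ^ α)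
  rw [← hk] at this
  linarith

lemma eventually_natCast_le_half_of_eq_floor (hα1 : α < 1) :
    ∀ᶠ p : ℕ in atTop, (k p : ℝ) ≤ p / 2 := by
  have hpow := (tendsto_rpow_atTop (by linarith : 0 < 1 - α)).comp
    (tendsto_natCast_atTop_atTop (R := ℝ))
  filter_upwards [hpow.eventually_ge_atTop (2 * c), eventually_gt_atTop 0] with p hp hp0
  have hp0' : (0 : ℝ) < p := Nat.cast_pos.mpr hp0
  have hsplit : (p : ℝ) = p ^ α * p ^ (1 - α) := by
    rw [← rpow_add hp0', add_sub_cancel, rpow_one]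
  calc (k p : ℝ) ≤ c * (p : ℝ) ^ α := hk p ▸ Nat.floor_le (by positivity)
    _ ≤ p / 2 := by
      rw [Function.comp_apply] at hp
      nlinarith [rpow_pos_of_pos hp0' α]

lemma tendsto_natCast_atTop_of_eq_floor (hα : 0 < α) :
    Tendsto (fun p => (k p : ℝ)) atTop atTop :=
  tendsto_atTop_mono' _ (eventually_half_mul_rpow_le_of_eq_floor hc hk hα)
    ((tendsto_mul_natCast_rpow_atTop hc hα).atTop_div_const two_pos)

lemma tendsto_sub_atTop_of_eq_floor (hα1 : α < 1) :
    Tendsto (fun p : ℕ => (p : ℝ) - k p) atTop atTop :=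
  tendsto_atTop_mono' _
    ((eventually_natCast_le_half_of_eq_floor hc hk hα1).mono fun p hp => by linarith)
    (tendsto_natCast_atTop_atTop.atTop_div_const two_pos)

lemma tendsto_sub_rpow_div_of_eq_floor (hα1 : α < 1) {γ : ℝ} (hγ0 : 0 ≤ γ) (hγα : γ < α) :
    Tendsto (fun p : ℕ => ((p : ℝ) - k p) ^ γ / k p) atTop (𝓝 0) := by
  have hdecay : Tendsto (fun p : ℕ => 2 / c * (p : ℝ) ^ (γ - α)) atTop (𝓝 0) := by
    simpa using ((tendsto_rpow_neg_atTop (by linarith : 0 < α - γ)).comp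
      tendsto_natCast_atTop_atTop).const_mul (2 / c)
  have hnonneg : ∀ᶠ p : ℕ in atTop, 0 ≤ ((p : ℝ) - k p) ^ γ / k p :=
    (eventually_natCast_le_half_of_eq_floor hc hk hα1).mono fun p hp =>
      div_nonneg (rpow_nonneg (by linarith [(p.cast_nonneg : (0 : ℝ) ≤ p)]) γ) (k p).cast_nonneg
  refine squeeze_zero' hnonneg ?_ hdecay
  filter_upwards [eventually_half_mul_rpow_le_of_eq_floor hc hk (hγ0.trans_lt hγα),
    eventually_natCast_le_half_of_eq_floor hc hk hα1, eventually_gt_atTop 0] with p hlow hhigh hp0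
  have hp0' : (0 : ℝ) < p := Nat.cast_pos.mpr hp0
  calc ((p : ℝ) - k p) ^ γ / k p ≤ (p : ℝ) ^ γ / (c * (p : ℝ) ^ α / 2) := by
        gcongr
        · linarith
        · linarith [(k p).cast_nonneg (α := ℝ)]
    _ = 2 / c * (p : ℝ) ^ (γ - α) := by
        rw [rpow_sub hp0']
        field_simp

end FloorRpow

theorem stmt12_general (α β lam c1 : ℝ)
    (hα : 0 < α) (hα2 : α < 1)
    (hβα : 1 - α < β) (hlam : 0 < lam) (hc1 : 0 < c1)
    (k L : ℕ → ℕ)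
    (hk : ∀ p : ℕ, k p = ⌊c1 * (p : ℝ) ^ α⌋₊)
    (hL : ∀ p : ℕ, L p = ⌈2 * β * (k p : ℝ) * Real.log ((p : ℝ) - (k p : ℝ)) / lam⌉₊)
    (S : ∀ p : ℕ, Finset (Fin p)) (μ : ∀ p : ℕ, Fin p → ℝ)
    (hS : ∀ p, (S p).card = k p)
    (hμ0 : ∀ p, ∀ j, j ∉ S p → μ p j = 0)
    (hμ1 : ∀ p, ∀ j ∈ S p,
      μ p j = Real.sqrt (lam / (k p : ℝ)) ∨ μ p j = -Real.sqrt (lam / (k p : ℝ)))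
    (SL : ∀ p : ℕ, (Fin (L p) → (Fin p → ℝ) × ℝ) → Finset (Fin p))
    (hSL : ∀ (p : ℕ) d, IsTopAbs (k p) (wL d) (SL p d)) :
    ∀ ε ∈ Set.Ioo (0 : ℝ) 1, Tendsto (fun p : ℕ =>
      ((Measure.pi fun _ : Fin (L p) => labeledLaw (μ p))
        {d | 1 - ε < ((S p ∩ SL p d).card : ℝ) / (k p : ℝ)}).toReal)
      atTop (nhds 1) := by
  rintro ε ⟨hε, -⟩
  have hβ : 0 < β := by linarith
  -- threshold `θ √(lam / k)`; both error terms vanish once `(1 - α) / β < θ ^ 2 < min 1 β⁻¹`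
  obtain ⟨η, hαη, hη⟩ : ∃ η, (1 - α) / β < η ∧ η < min 1 β⁻¹ :=
    exists_between (lt_min ((div_lt_one hβ).2 hβα)
      (by simpa [div_eq_mul_inv] using div_lt_div_of_pos_right (by linarith : 1 - α < 1) hβ))
  have hη0 : 0 < η := (div_pos (by linarith) hβ).trans hαη
  set θ := √η
  have hθ : θ ^ 2 = η := sq_sqrt hη0.le
  have hθ1 : θ < 1 := (sqrt_lt' one_pos).2 (by simpa using (lt_min_iff.mp hη).1)
  have hmiss_exp : 0 < β * (1 - θ) ^ 2 := mul_pos hβ (pow_pos (by linarith) 2)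
  have hfalse_exp : 1 - β * θ ^ 2 < α := by
    rw [hθ]; linarith [(div_lt_iff₀' hβ).1 hαη]
  have hfalse_exp0 : 0 ≤ 1 - β * θ ^ 2 := by
    rw [hθ]; linarith [mul_lt_mul_of_pos_left (lt_min_iff.mp hη).2 hβ, mul_inv_cancel₀ hβ.ne']
  have hbound : Tendsto (fun p : ℕ => 1 - 2 * (((p : ℝ) - k p) ^ (-(β * (1 - θ) ^ 2))
      + ((p : ℝ) - k p) ^ (1 - β * θ ^ 2) / k p) / ε) atTop (𝓝 1) := by
    have hlim := ((tendsto_rpow_neg_atTop hmiss_exp).comp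
      (tendsto_sub_atTop_of_eq_floor hc1 hk hα2)).add
      (tendsto_sub_rpow_div_of_eq_floor hc1 hk hα2 hfalse_exp0 hfalse_exp)
    simpa using ((hlim.const_mul 2).div_const ε).const_sub 1
  refine tendsto_of_tendsto_of_tendsto_of_le_of_le' hbound tendsto_const_nhds ?_
    (Eventually.of_forall fun p => measureReal_le_one)
  filter_upwards [(tendsto_natCast_atTop_of_eq_floor hc1 hk hα).eventually_ge_atTop 1,
    (tendsto_sub_atTop_of_eq_floor hc1 hk hα2).eventually_gt_atTop 1] with p hkp hXp
  exact le_measureReal_card_inter_of_le_sampleSize (by exact_mod_cast hkp) hXp hβ hlam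
    (by rw [hL p]; exact Nat.le_ceil _) (hS p) (hμ0 p)
    (fun j hj => (abs_eq (sqrt_nonneg _)).2 (hμ1 p j hj)) (sqrt_nonneg _) hθ1.le (hSL p) hε

/-- Proposition 2: success of the supervised top-`k` estimator. With
`k = ⌊c₁ p^α⌋`, `L = ⌈(2βk/λ) log(p-k)⌉` and `β > 1 - α`, the set `S_L` of the `k` largest
magnitudes of `w_L` recovers a `(1-ε)`-fraction of the support with probability tending to
one as `p → ∞`. -/
theorem stmt12 (α β lam c1 : ℝ)
    (hα : 0 < α) (hα2 : α < 1) (hβ : 0 < β) (hβ2 : β < 1)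
    (hβα : 1 - α < β) (hlam : 0 < lam) (hc1 : 0 < c1)
    (k L : ℕ → ℕ)
    (hk : ∀ p : ℕ, k p = ⌊c1 * (p : ℝ) ^ α⌋₊)
    (hL : ∀ p : ℕ, L p = ⌈2 * β * (k p : ℝ) * Real.log ((p : ℝ) - (k p : ℝ)) / lam⌉₊)
    (S : ∀ p : ℕ, Finset (Fin p)) (μ : ∀ p : ℕ, Fin p → ℝ)
    (hS : ∀ p, (S p).card = k p)
    (hμ0 : ∀ p, ∀ j, j ∉ S p → μ p j = 0)
    (hμ1 : ∀ p, ∀ j ∈ S p,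
      μ p j = Real.sqrt (lam / (k p : ℝ)) ∨ μ p j = -Real.sqrt (lam / (k p : ℝ)))
    (SL : ∀ p : ℕ, (Fin (L p) → (Fin p → ℝ) × ℝ) → Finset (Fin p))
    (hSL : ∀ (p : ℕ) d, IsTopAbs (k p) (wL d) (SL p d)) :
    ∀ ε ∈ Set.Ioo (0 : ℝ) 1, Tendsto (fun p : ℕ =>
      ((Measure.pi fun _ : Fin (L p) => labeledLaw (μ p))
        {d | 1 - ε < ((S p ∩ SL p d).card : ℝ) / (k p : ℝ)}).toReal)
      atTop (nhds 1) :=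
  stmt12_general α β lam c1 hα hα2 hβα hlam hc1 k L hk hL S μ hS hμ0 hμ1 SL hSL
end
end

section
/- Let R₁,…,R_n be i.i.d. Rademacher random variables (uniform on {−1,+1}), let L > 0 be a real number, and let d be a nonnegative integer. Then E[(L + Σ_{i=1}^n R_i)^d] ≤ (L + nd/(2L))^d. -/
/-!
Expand `(L + S)^d` binomially. The odd moments of `S = R₁ + ⋯ + Rₙ` vanish because flipping
every sign negates `S`, and conditioning on the first sign gives
`E[S_{n+1}^{2l}] = ∑ⱼ C(2l,2j) E[S_n^{2j}]`, whence `E[S^{2l}] ≤ n^l (2l-1)‼` by induction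
on `n`.
The term `C(d,2l) L^{d-2l} E[S^{2l}]` is then dominated by the term `C(d,l) L^{d-l} (nd/(2L))^l`
of the binomial expansion of `(L + nd/(2L))^d`, since
`2^l C(d,2l) (2l-1)‼ = d!/((d-2l)! l!) ≤ C(d,l) d^l`.
-/

open Finset Nat

namespace Nat

theorem factorial_two_mul_eq (l : ℕ) : (2 * l)! = 2 ^ l * l ! * (2 * l - 1)‼ := by
  cases l with
  | zero => rfl
  | succ l =>
    rw [show 2 * (l + 1) = 2 * l + 1 + 1 by ring, factorial_eq_mul_doubleFactorial,
      show 2 * l + 1 + 1 = 2 * (l + 1) by ring, doubleFactorial_two_mul,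
      show 2 * (l + 1) - 1 = 2 * l + 1 by omega]

theorem descFactorial_two_mul_le (d l : ℕ) :
    d.descFactorial (2 * l) ≤ d.descFactorial l * d ^ l := by
  rw [← descFactorial_mul_descFactorial (by omega : l ≤ 2 * l), two_mul, Nat.add_sub_cancel,
    mul_comm]
  gcongr
  exact (descFactorial_le_pow _ _).trans (Nat.pow_le_pow_left (Nat.sub_le _ _) _)

theorem two_pow_mul_choose_two_mul_mul_doubleFactorial_le (d l : ℕ) :
    2 ^ l * d.choose (2 * l) * (2 * l - 1)‼ ≤ d.choose l * d ^ l := by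
  refine Nat.le_of_mul_le_mul_left ?_ (factorial_pos l)
  calc l ! * (2 ^ l * d.choose (2 * l) * (2 * l - 1)‼)
      = d.descFactorial (2 * l) := by
        rw [descFactorial_eq_factorial_mul_choose, factorial_two_mul_eq]; ring
    _ ≤ d.descFactorial l * d ^ l := descFactorial_two_mul_le d l
    _ = l ! * (d.choose l * d ^ l) := by rw [descFactorial_eq_factorial_mul_choose]; ring

/-- After clearing factorials this is `2^m m! ≤ (2m)!` with `m = l - j`. -/
theorem choose_two_mul_mul_doubleFactorial_le {j l : ℕ} (h : j ≤ l) :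
    (2 * l).choose (2 * j) * (2 * j - 1)‼ ≤ l.choose j * (2 * l - 1)‼ := by
  obtain ⟨m, rfl⟩ := Nat.exists_eq_add_of_le h
  refine Nat.le_of_mul_le_mul_right ?_
    (by positivity : 0 < 2 ^ j * j ! * (2 * m)!)
  calc (2 * (j + m)).choose (2 * j) * (2 * j - 1)‼ * (2 ^ j * j ! * (2 * m)!)
      = (2 * (j + m))! := by
        rw [← choose_mul_factorial_mul_factorial (by omega : 2 * j ≤ 2 * (j + m)),
          factorial_two_mul_eq j, show 2 * (j + m) - 2 * j = 2 * m by omega]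
        ring
    _ = 2 ^ j * 2 ^ m * ((j + m).choose j * j ! * m !) * (2 * (j + m) - 1)‼ := by
        rw [factorial_two_mul_eq, ← choose_mul_factorial_mul_factorial (le_add_right j m),
          Nat.add_sub_cancel_left, pow_add]
    _ ≤ (j + m).choose j * (2 * (j + m) - 1)‼ * (2 ^ j * j ! * (2 * m)!) := by
        have := two_pow_mul_factorial_le_factorial_two_mul m
        calc _ = (j + m).choose j * (2 * (j + m) - 1)‼ * (2 ^ j * j ! * (2 ^ m * m !)) := by ring
          _ ≤ _ := by gcongr

end Nat

theorem Finset.sum_range_eq_sum_range_two_mul {M : Type*} [AddCommMonoid M] (m : ℕ)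
    (g : ℕ → M) (hg : ∀ j < m, Odd j → g j = 0) :
    ∑ j ∈ range m, g j = ∑ i ∈ range ((m + 1) / 2), g (2 * i) := by
  rw [← sum_image (g := (2 * ·)) (fun _ _ _ _ h => by simpa using h)]
  refine (sum_subset (fun j hj => ?_) (fun j hjm hj => hg j (mem_range.mp hjm) ?_)).symm
  · obtain ⟨i, hi, rfl⟩ := mem_image.mp hj
    simp only [mem_range] at hi ⊢
    omega
  · rcases Nat.even_or_odd' j with ⟨i, rfl | rfl⟩
    · refine absurd (mem_image_of_mem _ ?_) hj
      simp only [mem_range] at hjm ⊢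
      omega
    · exact odd_two_mul_add_one i

theorem add_one_pow_two_mul_add_sub_one_pow {R : Type*} [CommRing R] (x : R) (l : ℕ) :
    (x + 1) ^ (2 * l) + (x - 1) ^ (2 * l)
      = 2 * ∑ j ∈ range (l + 1), ((2 * l).choose (2 * j) : R) * x ^ (2 * j) := by
  rw [sub_eq_add_neg, add_pow, add_pow, ← sum_add_distrib,
    sum_range_eq_sum_range_two_mul _ _ (fun j hj hodd => ?_), mul_sum]
  · refine sum_congr (by congr 1; omega) (fun j hj => ?_)
    rw [← Nat.mul_sub, (even_two_mul (l - j)).neg_one_pow]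
    ring
  · rw [(Nat.Even.sub_odd (by omega) (even_two_mul l) hodd).neg_one_pow]
    ring

noncomputable def signSum {n : ℕ} (s : Fin n → Bool) : ℝ := ∑ i, if s i then 1 else -1

/-- `2 ^ n` times the `k`-th moment of a sum of `n` independent Rademacher signs. -/
noncomputable def signMoment (n k : ℕ) : ℝ := ∑ s : Fin n → Bool, signSum s ^ k

theorem signSum_not {n : ℕ} (s : Fin n → Bool) : signSum (fun i => !s i) = -signSum s := by
  rw [signSum, signSum, ← sum_neg_distrib]
  exact sum_congr rfl fun i _ => by cases s i <;> simp

theorem signSum_cons {n : ℕ} (b : Bool) (s : Fin n → Bool) :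
    signSum (Fin.cons b s : Fin (n + 1) → Bool) = (if b then 1 else -1) + signSum s := by
  simp [signSum, Fin.sum_univ_succ]

theorem signMoment_of_odd (n : ℕ) {k : ℕ} (hk : Odd k) : signMoment n k = 0 := by
  have h : signMoment n k = -signMoment n k := by
    calc signMoment n k = ∑ s : Fin n → Bool, signSum (fun i => !s i) ^ k :=
          (Equiv.sum_comp (Equiv.piCongrRight fun _ => Equiv.boolNot) _).symm
      _ = -signMoment n k := by simp only [signSum_not, hk.neg_pow, sum_neg_distrib, signMoment]
  linarith

theorem signMoment_succ (n k : ℕ) :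
    signMoment (n + 1) k = ∑ s : Fin n → Bool, ((signSum s + 1) ^ k + (signSum s - 1) ^ k) := by
  rw [signMoment, ← Equiv.sum_comp (Fin.consEquiv fun _ => Bool), Fintype.sum_prod_type,
    Fintype.sum_bool, ← sum_add_distrib]
  simp [Fin.consEquiv, signSum_cons, sub_eq_neg_add, add_comm]

theorem signMoment_two_mul_le (n l : ℕ) :
    signMoment n (2 * l) ≤ 2 ^ n * n ^ l * (2 * l - 1)‼ := by
  induction n generalizing l with
  | zero => cases l <;> simp [signMoment, signSum]
  | succ n ih =>
    calc signMoment (n + 1) (2 * l)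
        = 2 * ∑ j ∈ range (l + 1), ((2 * l).choose (2 * j) : ℝ) * signMoment n (2 * j) := by
          rw [signMoment_succ]
          simp_rw [add_one_pow_two_mul_add_sub_one_pow, signMoment, mul_sum]
          rw [sum_comm]
      _ ≤ 2 * ∑ j ∈ range (l + 1),
            ((2 * l).choose (2 * j) : ℝ) * (2 ^ n * n ^ j * (2 * j - 1)‼) := by
          gcongr with j; exact ih j
      _ ≤ 2 * ∑ j ∈ range (l + 1),
            2 ^ n * ((l.choose j * (2 * l - 1)‼ : ℕ) : ℝ) * n ^ j := by
          refine mul_le_mul_of_nonneg_left (sum_le_sum fun j hj => ?_) zero_le_two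
          calc ((2 * l).choose (2 * j) : ℝ) * (2 ^ n * n ^ j * (2 * j - 1)‼)
              = 2 ^ n * (((2 * l).choose (2 * j) * (2 * j - 1)‼ : ℕ) : ℝ) * n ^ j := by
                push_cast; ring
            _ ≤ _ := by
                have := Nat.choose_two_mul_mul_doubleFactorial_le
                  (Nat.lt_succ_iff.mp (mem_range.mp hj))
                gcongr 2 ^ n * ?_ * _
                exact_mod_cast this
      _ = 2 ^ (n + 1) * (n + 1 : ℕ) ^ l * (2 * l - 1)‼ := by
          rw [Nat.cast_succ, add_pow, mul_sum, mul_sum, sum_mul]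
          refine sum_congr rfl fun j _ => ?_
          push_cast; ring

theorem sum_add_signSum_pow (n d : ℕ) (L : ℝ) :
    ∑ s : Fin n → Bool, (L + signSum s) ^ d
      = ∑ i ∈ range (d / 2 + 1),
          (d.choose (2 * i) : ℝ) * L ^ (d - 2 * i) * signMoment n (2 * i) := by
  simp_rw [add_comm L, add_pow]
  rw [sum_comm, sum_range_eq_sum_range_two_mul _ _ (fun k _ hk => ?_)]
  · refine sum_congr (by congr 1; omega) fun i _ => ?_
    rw [← sum_mul, ← sum_mul, signMoment]
    ring
  · rw [← sum_mul, ← sum_mul, ← signMoment, signMoment_of_odd n hk, zero_mul, zero_mul]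

theorem choose_mul_signMoment_le (n : ℕ) {d i : ℕ} (h : 2 * i ≤ d) {L : ℝ} (hL : 0 < L) :
    (d.choose (2 * i) : ℝ) * L ^ (d - 2 * i) * signMoment n (2 * i)
      ≤ 2 ^ n * ((n * d / (2 * L)) ^ i * L ^ (d - i) * d.choose i) := by
  obtain ⟨m, rfl⟩ := Nat.exists_eq_add_of_le h
  have hcomb : (2 : ℝ) ^ i * (2 * i + m).choose (2 * i) * (2 * i - 1)‼
      ≤ (2 * i + m).choose i * (2 * i + m : ℕ) ^ i := by
    exact_mod_cast Nat.two_pow_mul_choose_two_mul_mul_doubleFactorial_le (2 * i + m) i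
  rw [Nat.add_sub_cancel_left, show 2 * i + m - i = i + m by omega]
  calc ((2 * i + m).choose (2 * i) : ℝ) * L ^ m * signMoment n (2 * i)
      ≤ (2 * i + m).choose (2 * i) * L ^ m * (2 ^ n * n ^ i * (2 * i - 1)‼) := by
        gcongr; exact signMoment_two_mul_le n i
    _ = 2 ^ n * n ^ i * L ^ m / 2 ^ i *
          (2 ^ i * (2 * i + m).choose (2 * i) * (2 * i - 1)‼) := by
        field_simp
    _ ≤ 2 ^ n * n ^ i * L ^ m / 2 ^ i * ((2 * i + m).choose i * (2 * i + m : ℕ) ^ i) := by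
        gcongr
    _ = _ := by
        rw [div_pow, mul_pow, mul_pow, pow_add]
        field_simp

/-- moment bound for a shifted Rademacher sum. For i.i.d. Rademacher
variables `R₁, …, R_n` (uniform signs, here encoded by averaging over all sign patterns
`s : Fin n → Bool`), any real `L > 0` and any natural number `d`,
`E[(L + ∑ Rᵢ)^d] ≤ (L + nd/(2L))^d`. -/
theorem stmt14 (n : ℕ) (L : ℝ) (hL : 0 < L) (d : ℕ) :
    ((2 : ℝ) ^ n)⁻¹ * ∑ s : Fin n → Bool,
        (L + ∑ i, (if s i then (1 : ℝ) else -1)) ^ d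
      ≤ (L + (n : ℝ) * (d : ℝ) / (2 * L)) ^ d := by
  rw [inv_mul_le_iff₀ (by positivity)]
  change ∑ s, (L + signSum s) ^ d ≤ _
  rw [sum_add_signSum_pow, add_comm L, add_pow, mul_sum]
  calc _ ≤ ∑ i ∈ range (d / 2 + 1),
          2 ^ n * ((n * d / (2 * L)) ^ i * L ^ (d - i) * d.choose i) :=
        sum_le_sum fun i hi => choose_mul_signMoment_le n (by have := mem_range.mp hi; omega) hL
    _ ≤ _ := sum_le_sum_of_subset_of_nonneg (range_subset_range.mpr (by omega))
        fun _ _ _ => by positivity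
end

section
/- Let λ ∈ (0,1), let k be a positive integer, let w ~ N(0, (k−1)/k), and define q(w) = tanh(λ + √λ·w) − tanh²(λ + √λ·w). Then E[q(w)] ≤ 3√(λ/k). -/
/-!
Let `q x = tanh x - tanh² x` and `Y ~ N(m, s)` with `0 < s ≤ m`. The law of `-Y` has density
`exp (-c y)`, `c = 2m/s ≥ 2`, with respect to that of `Y`, so
`2 E q(Y) = E [q(Y) + q(-Y) exp (-c Y)]`. With `u = exp (-2y)` and `r = exp ((2 - c) y)` this
integrand equals `2u(1 - u)(1 - r)/(1 + u)²`, which is at most `(1 - u)(1 - r)/2` because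
`4u ≤ (1 + u)²` and `u`, `r` lie on the same side of `1`. The Gaussian moment generating function
gives `E u = E r = exp (-2(m - s))` and `E [u r] = 1`, hence
`E q(Y) ≤ (1 - exp (-2(m - s)))/2 ≤ m - s`, which is `λ/k` for `Y = λ + √λ w`.
-/

open MeasureTheory ProbabilityTheory
open scoped ENNReal NNReal

noncomputable def tanhSubSq (x : ℝ) : ℝ := Real.tanh x - Real.tanh x ^ 2

lemma Real.tanh_eq_one_sub_exp_div (x : ℝ) :
    Real.tanh x = (1 - Real.exp (-2 * x)) / (1 + Real.exp (-2 * x)) := by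
  rw [Real.tanh_eq, show -2 * x = -x + -x by ring, Real.exp_add]
  have := Real.exp_pos x
  rw [Real.exp_neg]
  field_simp

lemma tanhSubSq_le_of_nonneg {x : ℝ} (hx : 0 ≤ x) :
    tanhSubSq x ≤ (1 - Real.exp (-2 * x)) / 2 := by
  have hu : Real.exp (-2 * x) ≤ 1 := Real.exp_le_one_iff.mpr (by linarith)
  have hu0 := Real.exp_pos (-2 * x)
  rw [tanhSubSq, Real.tanh_eq_one_sub_exp_div]
  set u := Real.exp (-2 * x)
  rw [div_pow, div_sub_div _ _ (by positivity) (by positivity),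
    div_le_div_iff₀ (by positivity) (by positivity)]
  nlinarith [pow_nonneg (sub_nonneg.mpr hu) 3, mul_pos hu0 hu0]

lemma tanhSubSq_add_tanhSubSq_neg_mul_exp_le {c : ℝ} (hc : 2 ≤ c) (x : ℝ) :
    tanhSubSq x + tanhSubSq (-x) * Real.exp (-c * x)
      ≤ (1 - Real.exp (-2 * x) - Real.exp ((2 - c) * x) + Real.exp (-c * x)) / 2 := by
  have hsign : 0 ≤ (1 - Real.exp (-2 * x)) * (1 - Real.exp ((2 - c) * x)) := by
    rcases le_total 0 x with hx | hx
    · exact mul_nonneg (sub_nonneg.mpr (Real.exp_le_one_iff.mpr (by nlinarith)))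
        (sub_nonneg.mpr (Real.exp_le_one_iff.mpr (by nlinarith)))
    · exact mul_nonneg_of_nonpos_of_nonpos (sub_nonpos.mpr (Real.one_le_exp (by nlinarith)))
        (sub_nonpos.mpr (Real.one_le_exp (by nlinarith)))
  have hsplit : Real.exp (-c * x) = Real.exp (-2 * x) * Real.exp ((2 - c) * x) := by
    rw [← Real.exp_add]; ring_nf
  rw [tanhSubSq, tanhSubSq, Real.tanh_neg, Real.tanh_eq_one_sub_exp_div, hsplit]
  set u := Real.exp (-2 * x)
  set r := Real.exp ((2 - c) * x)
  have hu : 0 < u := Real.exp_pos _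
  have hdefect : (1 - u - r + u * r) / 2 - ((1 - u) / (1 + u) - ((1 - u) / (1 + u)) ^ 2
      + (-((1 - u) / (1 + u)) - (-((1 - u) / (1 + u))) ^ 2) * (u * r))
      = (1 - u) ^ 2 * ((1 - u) * (1 - r)) / (2 * (1 + u) ^ 2) := by
    field_simp
    ring
  have : 0 ≤ (1 - u) ^ 2 * ((1 - u) * (1 - r)) / (2 * (1 + u) ^ 2) := by positivity
  linarith

lemma gaussianPDFReal_neg (m : ℝ) (s : ℝ≥0) (x : ℝ) :
    gaussianPDFReal m s (-x) = gaussianPDFReal m s x * Real.exp (-(2 * m / s) * x) := by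
  rcases eq_or_ne s 0 with rfl | hs
  · simp [gaussianPDFReal_zero_var]
  have hs' : (s : ℝ) ≠ 0 := mod_cast hs
  rw [gaussianPDFReal, gaussianPDFReal, mul_assoc _ (Real.exp _), ← Real.exp_add]
  congr 2
  field_simp
  ring

lemma integral_comp_neg_gaussianReal {m : ℝ} {s : ℝ≥0} (hs : s ≠ 0) (f : ℝ → ℝ) :
    ∫ x, f (-x) ∂gaussianReal m s
      = ∫ x, f x * Real.exp (-(2 * m / s) * x) ∂gaussianReal m s := by
  rw [integral_gaussianReal_eq_integral_smul hs, integral_gaussianReal_eq_integral_smul hs,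
    ← integral_neg_eq_self]
  simp only [neg_neg, gaussianPDFReal_neg, smul_eq_mul]
  congr 1 with x
  ring

lemma integral_exp_mul_gaussianReal (m : ℝ) (s : ℝ≥0) (t : ℝ) :
    ∫ x, Real.exp (t * x) ∂gaussianReal m s = Real.exp (m * t + s * t ^ 2 / 2) :=
  congrFun mgf_fun_id_gaussianReal t

@[fun_prop]
lemma Real.continuous_tanh_s17 : Continuous Real.tanh := by
  simp_rw [funext Real.tanh_eq_sinh_div_cosh]
  exact Real.continuous_sinh.div Real.continuous_cosh fun x => (Real.cosh_pos x).ne'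

@[fun_prop]
lemma continuous_tanhSubSq : Continuous tanhSubSq := by
  unfold tanhSubSq
  fun_prop

lemma abs_tanhSubSq_le (x : ℝ) : |tanhSubSq x| ≤ 2 := by
  have h := Real.abs_tanh_lt_one x
  rw [abs_lt] at h
  rw [tanhSubSq, abs_le]
  constructor <;> nlinarith

lemma integrable_tanhSubSq_comp_neg_mul_exp {m : ℝ} {s : ℝ≥0} (t : ℝ) :
    Integrable (fun x => tanhSubSq (-x) * Real.exp (t * x)) (gaussianReal m s) := by
  refine ((integrable_exp_mul_gaussianReal t).const_mul 2).mono'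
    (by fun_prop) (ae_of_all _ fun x => ?_)
  rw [norm_mul, Real.norm_eq_abs, Real.norm_eq_abs, abs_of_pos (Real.exp_pos _)]
  exact mul_le_mul_of_nonneg_right (abs_tanhSubSq_le _) (Real.exp_pos _).le

lemma integral_exp_combination_gaussianReal {m : ℝ} {s : ℝ≥0} (hs : s ≠ 0) :
    ∫ x, (1 - Real.exp (-2 * x) - Real.exp ((2 - 2 * m / s) * x) + Real.exp (-(2 * m / s) * x))
      / 2 ∂gaussianReal m s = 1 - Real.exp (-2 * (m - s)) := by
  have hexp := fun t => integrable_exp_mul_gaussianReal (μ := m) (v := s) t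
  rw [integral_div, integral_add, integral_sub, integral_sub, integral_const]
  · have e₁ : m * (2 - 2 * m / s) + s * (2 - 2 * m / s) ^ 2 / 2 = -2 * (m - s) := by
      field_simp; ring
    have e₂ : m * -(2 * m / s) + s * (-(2 * m / s)) ^ 2 / 2 = 0 := by
      field_simp; ring
    simp only [integral_exp_mul_gaussianReal, probReal_univ, smul_eq_mul, mul_one, e₁, e₂,
      Real.exp_zero]
    ring_nf
  all_goals fun_prop

lemma integral_tanhSubSq_gaussianReal_le {m : ℝ} {s : ℝ≥0} (hsm : (s : ℝ) ≤ m) :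
    ∫ x, tanhSubSq x ∂gaussianReal m s ≤ (1 - Real.exp (-2 * (m - s))) / 2 := by
  rcases eq_or_ne s 0 with rfl | hs
  · simpa [gaussianReal_zero_var] using tanhSubSq_le_of_nonneg hsm
  have hc : 2 ≤ 2 * m / s := by
    rw [le_div_iff₀ (by positivity)]; linarith
  have hreflect : ∫ x, tanhSubSq x ∂gaussianReal m s
      = ∫ x, tanhSubSq (-x) * Real.exp (-(2 * m / s) * x) ∂gaussianReal m s := by
    simpa only [neg_neg] using integral_comp_neg_gaussianReal hs (fun x => tanhSubSq (-x))
  have hint : Integrable tanhSubSq (gaussianReal m s) :=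
    (integrable_const 2).mono' (by fun_prop) (ae_of_all _ abs_tanhSubSq_le)
  have hexp := fun t => integrable_exp_mul_gaussianReal (μ := m) (v := s) t
  have hsum :
      ∫ x, tanhSubSq x + tanhSubSq (-x) * Real.exp (-(2 * m / s) * x) ∂gaussianReal m s
        ≤ 1 - Real.exp (-2 * (m - s)) :=
    (integral_mono (hint.add (integrable_tanhSubSq_comp_neg_mul_exp _))
      (by fun_prop)
      (tanhSubSq_add_tanhSubSq_neg_mul_exp_le hc)).trans_eq
      (integral_exp_combination_gaussianReal hs)
  rw [integral_add hint (integrable_tanhSubSq_comp_neg_mul_exp _), ← hreflect] at hsum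
  linarith

/-- for `λ ∈ (0,1)`, a positive integer `k`, `w ~ N(0, (k-1)/k)` and
`q(w) = tanh(λ + √λ w) - tanh²(λ + √λ w)`, we have `E[q(w)] ≤ 3 √(λ/k)`. -/
theorem stmt17 (lam : ℝ) (hlam : lam ∈ Set.Ioo (0 : ℝ) 1) (k : ℕ) (hk : 0 < k)
    (q : ℝ → ℝ)
    (hq : q = fun w => Real.tanh (lam + Real.sqrt lam * w)
      - Real.tanh (lam + Real.sqrt lam * w) ^ 2) :
    (∫ w, q w ∂(gaussianReal 0 (((k - 1 : ℕ) : ℝ≥0) / (k : ℝ≥0))))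
      ≤ 3 * Real.sqrt (lam / k) := by
  obtain ⟨hlam₀, hlam₁⟩ := hlam
  have hV : ((((k - 1 : ℕ) : ℝ≥0) / (k : ℝ≥0) : ℝ≥0) : ℝ) = (k - 1) / k := by
    rw [NNReal.coe_div, NNReal.coe_natCast, NNReal.coe_natCast, Nat.cast_sub hk, Nat.cast_one]
  generalize ((k - 1 : ℕ) : ℝ≥0) / (k : ℝ≥0) = V at hV ⊢
  have hlaw : HasLaw (fun w => lam + Real.sqrt lam * w)
      (gaussianReal lam (.mk (Real.sqrt lam ^ 2) (sq_nonneg _) * V)) (gaussianReal 0 V) := by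
    simpa using gaussianReal_const_add
      (gaussianReal_const_mul (HasLaw.id (μ := gaussianReal 0 V)) (Real.sqrt lam)) lam
  set s : ℝ≥0 := .mk (Real.sqrt lam ^ 2) (sq_nonneg _) * V
  have hk' : (1 : ℝ) ≤ k := by exact_mod_cast hk
  have hs : lam - s = lam / k := by
    simp only [s, NNReal.coe_mul, NNReal.coe_mk, Real.sq_sqrt hlam₀.le, hV]
    field_simp
    ring
  have hlamk : lam / k ≤ 1 := by rw [div_le_one (by positivity)]; linarith
  calc ∫ w, q w ∂gaussianReal 0 V
      = ∫ x, tanhSubSq x ∂gaussianReal lam s := by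
        rw [hq]; exact hlaw.integral_comp (f := tanhSubSq) (by fun_prop)
    _ ≤ (1 - Real.exp (-2 * (lam / k))) / 2 :=
        hs ▸ integral_tanhSubSq_gaussianReal_le (by rw [← sub_nonneg, hs]; positivity)
    _ ≤ lam / k := by linarith [Real.add_one_le_exp (-2 * (lam / k))]
    _ ≤ Real.sqrt (lam / k) := (Real.le_sqrt (by positivity) (by positivity)).2
        (pow_le_of_le_one (by positivity) hlamk two_ne_zero)
    _ ≤ 3 * Real.sqrt (lam / k) := by linarith [Real.sqrt_nonneg (lam / k)]
end
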